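/- Let s be a decorated slice and a a symbol. If δ_d'(s, a) is not doomed (i.e., contains a node decorated 1), then in the improved slice-based construction Δ(merge(s), a) = { merge(δ_d'(s, a)) }. -/
import Mathlib


/-- Decorations of slice nodes. -/
inductive Dec | zero | star | one
deriving DecidableEq

/-- A decorated slice: a sequence of sets of states with decorations. -/
abbrev DSlice (Q : Type*) := List (Set Q × Dec)

/-- Two adjacent decorations are mergible iff equal and in `{0, *}`. -/
def mergibleB (d e : Dec) : Bool :=
  decide (d = e) && (decide (d = Dec.zero) || decide (d = Dec.star))

/-- `merge`: recursively merge all adjacent mergible nodes. -/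
def dmerge {Q : Type*} : DSlice Q → DSlice Q
  | [] => []
  | [x] => [x]
  | x :: y :: rest =>
    if mergibleB x.2 y.2 then dmerge ((x.1 ∪ y.1, x.2) :: rest)
    else x :: dmerge (y :: rest)
termination_by s => s.length

/-- Merge as many as possible but at most `j` merging operations at the front
(so at most `j + 1` consecutive nodes get merged into one). -/
def mergeFront {Q : Type*} : ℕ → DSlice Q → DSlice Q
  | 0, s => s
  | _ + 1, [] => []
  | _ + 1, [x] => [x]
  | j + 1, x :: y :: rest =>
    if mergibleB x.2 y.2 then mergeFront j ((x.1 ∪ y.1, x.2) :: rest) else x :: y :: rest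

/-- The positions of the mergible pairs of adjacent nodes, left to right. -/
def mergiblePos {Q : Type*} (s : DSlice Q) : List ℕ :=
  (List.range s.length).filter fun k =>
    match s[k]?, s[k + 1]? with
    | some x, some y => mergibleB x.2 y.2
    | _, _ => false

/-- `merge_{i,j}`: merge as many as possible and at most `j` consecutive
mergible nodes, starting from the `i`-th (1-indexed) mergible pair. -/
def mergeIJ {Q : Type*} (i j : ℕ) (s : DSlice Q) : DSlice Q :=
  match (mergiblePos s)[i - 1]? with
  | none => s
  | some k => s.take k ++ mergeFront (j - 1) (s.drop k)

/-- A (decorated) slice is a reset slice iff no node is decorated `0`. -/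
def isResetB {Q : Type*} (s : DSlice Q) : Bool := s.all fun x => !(decide (x.2 = Dec.zero))

/-- A slice is doomed iff no node is decorated `1`. -/
def Doomed {Q : Type*} (s : DSlice Q) : Prop := ∀ x ∈ s, x.2 ≠ Dec.one

/-- Decorations of the (left, right) children of a `d`-decorated node,
depending on whether the current slice is a reset slice. -/
def decPair (reset : Bool) (d : Dec) : Dec × Dec :=
  if reset then
    match d with
    | Dec.one => (Dec.zero, Dec.one)
    | _ => (Dec.zero, Dec.zero)
  else
    match d with
    | Dec.one => (Dec.star, Dec.one)
    | d => (d, d)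

/-- One step of decorated-slice evolution, before deletion of empty nodes. -/
def ddAux {A Q : Type*} (δ : Q → A → Set Q) (F : Set Q) (a : A) (reset : Bool) :
    DSlice Q → Set Q → DSlice Q
  | [], _ => []
  | (Qi, d) :: rest, seen =>
    ((((⋃ q ∈ Qi, δ q a) ∩ F) \ seen), (decPair reset d).1) ::
    ((((⋃ q ∈ Qi, δ q a) \ F) \ seen), (decPair reset d).2) ::
      ddAux δ F a reset rest
        (seen ∪ ((((⋃ q ∈ Qi, δ q a) ∩ F) \ seen)) ∪ (((⋃ q ∈ Qi, δ q a) \ F) \ seen))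

/-- The deterministic decorated-successor function `δ_d'` of the improved
slice-based construction: split nodes, decorate children, delete empty nodes. -/
noncomputable def ddSucc {A Q : Type*} (δ : Q → A → Set Q) (F : Set Q)
    (s : DSlice Q) (a : A) : DSlice Q :=
  (ddAux δ F a (isResetB s) s ∅).filter fun x => @decide x.1.Nonempty (Classical.propDecidable _)

/-- The transition function of the improved slice-based construction on
decorated slices: if the successor is not doomed, go to its merge. -/
noncomputable def deltaDec {A Q : Type*} (δ : Q → A → Set Q) (F : Set Q)
    (s : DSlice Q) (a : A) : Set (DSlice Q) :=
  {t | ¬ Doomed (ddSucc δ F s a) ∧ t = dmerge (ddSucc δ F s a)}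

section Aux
variable {Q : Type*}

/-- smart cons -/
def scons (x : Set Q × Dec) : DSlice Q → DSlice Q
  | [] => [x]
  | y :: t => if mergibleB x.2 y.2 then (x.1 ∪ y.1, x.2) :: t else x :: y :: t

lemma mergibleB_eq {d e : Dec} (h : mergibleB d e = true) : d = e := by
  simp [mergibleB] at h; exact h.1

lemma scons_scons {x y : Set Q × Dec} (h : mergibleB x.2 y.2 = true) (m : DSlice Q) :
    scons x (scons y m) = scons (x.1 ∪ y.1, x.2) m := by
  have hxy : x.2 = y.2 := mergibleB_eq h
  cases m with
  | nil => simp [scons, h]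
  | cons z t =>
    by_cases hz : mergibleB y.2 z.2 = true
    · have hz' : mergibleB x.2 z.2 = true := by rw [hxy]; exact hz
      simp [scons, h, hz, hz', Set.union_assoc]
    · have hz' : ¬ mergibleB x.2 z.2 = true := by rw [hxy]; exact hz
      simp [scons, h, hz, hz']

lemma scons_not {x y : Set Q × Dec} (h : ¬ mergibleB x.2 y.2 = true) (m : DSlice Q) :
    scons x (scons y m) = x :: scons y m := by
  cases m with
  | nil => simp [scons, h]
  | cons z t =>
    by_cases hz : mergibleB y.2 z.2 = true <;> simp [scons, h, hz]

lemma dmerge_cons (x : Set Q × Dec) (l : DSlice Q) :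
    dmerge (x :: l) = scons x (dmerge l) := by
  match l with
  | [] => simp [dmerge, scons]
  | y :: t =>
    by_cases h : mergibleB x.2 y.2 = true
    · rw [show dmerge (x :: y :: t) = dmerge ((x.1 ∪ y.1, x.2) :: t) by
        rw [dmerge]; simp [h]]
      rw [dmerge_cons (x.1 ∪ y.1, x.2) t, dmerge_cons y t, scons_scons h]
    · rw [show dmerge (x :: y :: t) = x :: dmerge (y :: t) by
        rw [dmerge]; simp [h]]
      rw [dmerge_cons y t, scons_not h]
termination_by l.length

/-- filter of nonempty nodes -/
noncomputable def filNE (l : DSlice Q) : DSlice Q :=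
  l.filter fun x => @decide x.1.Nonempty (Classical.propDecidable _)

open Classical in
noncomputable def Fop (c : Dec) (S : Set Q) (m : DSlice Q) : DSlice Q :=
  if S.Nonempty then scons (S, c) m else m

lemma dmerge_filNE_cons (z : Set Q × Dec) (l : DSlice Q) :
    dmerge (filNE (z :: l)) = Fop z.2 z.1 (dmerge (filNE l)) := by
  by_cases h : z.1.Nonempty <;>
    simp [filNE, Fop, h, List.filter_cons, dmerge_cons]

lemma Fop_Fop {c : Dec} (hc : mergibleB c c = true) (S T : Set Q) (m : DSlice Q) :
    Fop c S (Fop c T m) = Fop c (S ∪ T) m := by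
  by_cases hS : S.Nonempty
  · by_cases hT : T.Nonempty
    · have hST : (S ∪ T).Nonempty := hS.inl
      simp only [Fop, if_pos hS, if_pos hT, if_pos hST]
      exact scons_scons (x := (S, c)) (y := (T, c)) hc m
    · rw [Set.not_nonempty_iff_eq_empty] at hT
      subst hT
      simp [Fop, hS]
  · rw [Set.not_nonempty_iff_eq_empty] at hS
    subst hS
    rw [Set.empty_union]
    simp [Fop]

lemma setsplit (U V F seen : Set Q) :
    (((U ∪ V) ∩ F) \ seen) ∪ (((U ∪ V) \ F) \ seen)
      = ((U ∩ F) \ seen) ∪ ((U \ F) \ seen)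
        ∪ ((V ∩ F) \ (seen ∪ ((U ∩ F) \ seen) ∪ ((U \ F) \ seen)))
        ∪ ((V \ F) \ (seen ∪ ((U ∩ F) \ seen) ∪ ((U \ F) \ seen))) := by
  ext q; simp only [Set.mem_union, Set.mem_inter_iff, Set.mem_diff]; tauto

lemma seensplit (U V F seen : Set Q) :
    seen ∪ (((U ∪ V) ∩ F) \ seen) ∪ (((U ∪ V) \ F) \ seen)
      = (seen ∪ ((U ∩ F) \ seen) ∪ ((U \ F) \ seen))
        ∪ ((V ∩ F) \ (seen ∪ ((U ∩ F) \ seen) ∪ ((U \ F) \ seen)))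
        ∪ ((V \ F) \ (seen ∪ ((U ∩ F) \ seen) ∪ ((U \ F) \ seen))) := by
  ext q; simp only [Set.mem_union, Set.mem_inter_iff, Set.mem_diff]; tauto

lemma decPair_self {r : Bool} {d : Dec} (h : d = Dec.zero ∨ d = Dec.star) :
    ∃ c, decPair r d = (c, c) ∧ mergibleB c c = true := by
  rcases h with h | h <;> subst h <;> cases r <;>
    exact ⟨_, rfl, by decide⟩

lemma ddAux_cons {A : Type*} (δ : Q → A → Set Q) (F : Set Q) (a : A) (r : Bool)
    (Qi : Set Q) (d : Dec) (rest : DSlice Q) (seen : Set Q) :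
    ddAux δ F a r ((Qi, d) :: rest) seen =
      ((((⋃ q ∈ Qi, δ q a) ∩ F) \ seen), (decPair r d).1) ::
      ((((⋃ q ∈ Qi, δ q a) \ F) \ seen), (decPair r d).2) ::
        ddAux δ F a r rest
          (seen ∪ ((((⋃ q ∈ Qi, δ q a) ∩ F) \ seen)) ∪ (((⋃ q ∈ Qi, δ q a) \ F) \ seen)) := rfl

section Step
variable {A : Type*} (δ : Q → A → Set Q) (F : Set Q) (a : A) (r : Bool)

lemma step (x y : Set Q × Dec) (rest : DSlice Q) (seen : Set Q)
    (h : mergibleB x.2 y.2 = true) :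
    dmerge (filNE (ddAux δ F a r ((x.1 ∪ y.1, x.2) :: rest) seen))
      = dmerge (filNE (ddAux δ F a r (x :: y :: rest) seen)) := by
  obtain ⟨X, dx⟩ := x
  obtain ⟨Y, dy⟩ := y
  simp only at h
  have hxy : dx = dy := mergibleB_eq h
  subst hxy
  have hd : dx = Dec.zero ∨ dx = Dec.star := by
    simp [mergibleB] at h; exact h
  obtain ⟨c, hc1, hc2⟩ := decPair_self (r := r) hd
  simp only [ddAux, hc1, Set.biUnion_union]
  rw [dmerge_filNE_cons, dmerge_filNE_cons, dmerge_filNE_cons, dmerge_filNE_cons,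
    dmerge_filNE_cons, dmerge_filNE_cons]
  dsimp only
  rw [Fop_Fop hc2, Fop_Fop hc2, Fop_Fop hc2, Fop_Fop hc2]
  rw [setsplit (⋃ q ∈ X, δ q a) (⋃ q ∈ Y, δ q a) F seen,
    seensplit (⋃ q ∈ X, δ q a) (⋃ q ∈ Y, δ q a) F seen]

theorem mainLem : ∀ (s : DSlice Q) (seen : Set Q),
    dmerge (filNE (ddAux δ F a r (dmerge s) seen))
      = dmerge (filNE (ddAux δ F a r s seen))
  | [], _ => by rw [show dmerge ([] : DSlice Q) = [] from by rw [dmerge]]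
  | [x], _ => by rw [show dmerge [x] = [x] from by rw [dmerge]]
  | x :: y :: rest, seen => by
    by_cases h : mergibleB x.2 y.2 = true
    · rw [show dmerge (x :: y :: rest) = dmerge ((x.1 ∪ y.1, x.2) :: rest) by
        rw [dmerge]; simp [h]]
      rw [mainLem ((x.1 ∪ y.1, x.2) :: rest) seen, step δ F a r x y rest seen h]
    · rw [show dmerge (x :: y :: rest) = x :: dmerge (y :: rest) by
        rw [dmerge]; simp [h]]
      obtain ⟨X, dx⟩ := x
      rw [ddAux_cons δ F a r X dx (dmerge (y :: rest)) seen,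
        ddAux_cons δ F a r X dx (y :: rest) seen]
      rw [dmerge_filNE_cons, dmerge_filNE_cons, dmerge_filNE_cons, dmerge_filNE_cons]
      simp only
      rw [mainLem (y :: rest) _]
termination_by s => s.length

end Step

lemma isResetB_scons (x : Set Q × Dec) (m : DSlice Q) :
    isResetB (scons x m) = (!(decide (x.2 = Dec.zero)) && isResetB m) := by
  cases m with
  | nil => simp [scons, isResetB]
  | cons y t =>
    by_cases h : mergibleB x.2 y.2 = true
    · have hxy : x.2 = y.2 := mergibleB_eq h
      simp only [scons]
      rw [if_pos h]
      simp only [isResetB, List.all_cons, ← hxy]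
      cases decide (x.2 = Dec.zero) <;> simp
    · simp [scons, h, isResetB, Bool.and_assoc]

lemma isResetB_dmerge (l : DSlice Q) : isResetB (dmerge l) = isResetB l := by
  induction l with
  | nil => rw [show dmerge ([] : DSlice Q) = [] from by rw [dmerge]]
  | cons x l ih =>
    rw [dmerge_cons, isResetB_scons, ih]
    simp [isResetB]

lemma Doomed_cons (z : Set Q × Dec) (l : DSlice Q) :
    Doomed (z :: l) ↔ z.2 ≠ Dec.one ∧ Doomed l := by
  simp [Doomed]

lemma Doomed_scons (x : Set Q × Dec) (m : DSlice Q) :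
    Doomed (scons x m) ↔ x.2 ≠ Dec.one ∧ Doomed m := by
  cases m with
  | nil => simp [scons, Doomed]
  | cons y t =>
    by_cases h : mergibleB x.2 y.2 = true
    · have hxy : x.2 = y.2 := mergibleB_eq h
      simp only [scons]
      rw [if_pos h]
      simp only [Doomed_cons]
      rw [hxy]
      tauto
    · simp only [scons, if_neg h, Doomed_cons]

lemma Doomed_dmerge (l : DSlice Q) : Doomed (dmerge l) ↔ Doomed l := by
  induction l with
  | nil => rw [show dmerge ([] : DSlice Q) = [] from by rw [dmerge]]
  | cons x l ih =>
    rw [dmerge_cons, Doomed_scons, ih, Doomed_cons]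

end Aux

/-- If `δ_d'(s, a)` is not doomed, then `Δ(merge(s), a) = {merge(δ_d'(s, a))}`. -/
theorem stmt13 {A Q : Type*} (δ : Q → A → Set Q) (F : Set Q) (s : DSlice Q) (a : A)
    (hne : ∀ x ∈ s, x.1.Nonempty)
    (hdisj : s.Pairwise (fun x y => Disjoint x.1 y.1))
    (hnd : ¬ Doomed (ddSucc δ F s a)) :
    deltaDec δ F (dmerge s) a = {dmerge (ddSucc δ F s a)} := by
  have hres : isResetB (dmerge s) = isResetB s := isResetB_dmerge s
  have hmain : dmerge (ddSucc δ F (dmerge s) a) = dmerge (ddSucc δ F s a) := by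
    show dmerge (filNE (ddAux δ F a (isResetB (dmerge s)) (dmerge s) ∅))
        = dmerge (filNE (ddAux δ F a (isResetB s) s ∅))
    rw [hres]
    exact mainLem δ F a (isResetB s) s ∅
  have hdm : ¬ Doomed (ddSucc δ F (dmerge s) a) := by
    intro hD
    apply hnd
    have h1 : Doomed (dmerge (ddSucc δ F (dmerge s) a)) := (Doomed_dmerge _).mpr hD
    rw [hmain] at h1
    exact (Doomed_dmerge _).mp h1
  ext t
  simp only [deltaDec, Set.mem_setOf_eq, Set.mem_singleton_iff, hmain]
  exact ⟨fun h => h.2, fun h => ⟨hdm, h⟩⟩
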